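/- arXiv:2510.24226 — 5 statements merged into one kernel-verified Lean document; each statement's English description precedes it below -/
import Mathlib

section
/- Let G be a finite simple graph, let μ ≥ 1 be an integer, and let σ = ⟨I₀, I₁, …, I_ℓ⟩ be a reconfiguration sequence under k-TJ between independent sets I₀ and I_ℓ, where k = |I₀| − μ ≥ 1. Suppose σ is shortest, i.e., no reconfiguration sequence between I₀ and I_ℓ under k-TJ has length strictly less than ℓ. Then for all indices 0 ≤ i < j ≤ ℓ with j − i ≥ 2, we have |I_i ∩ I_j| < μ. -/
/-- A set of vertices is independent: no two of its vertices are adjacent. -/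
def IndepSet {α : Type*} (G : SimpleGraph α) (S : Finset α) : Prop :=
  ∀ ⦃u⦄, u ∈ S → ∀ ⦃v⦄, v ∈ S → ¬ G.Adj u v

/-- `f 0, f 1, …, f ℓ` is a reconfiguration sequence of independent sets from `I` to `J`
under the `k`-Token-Jumping rule. -/
def IsTJSeq {α : Type*} [DecidableEq α] (G : SimpleGraph α) (k : ℕ) (I J : Finset α)
    (f : ℕ → Finset α) (ℓ : ℕ) : Prop :=
  f 0 = I ∧ f ℓ = J ∧ (∀ i ≤ ℓ, IndepSet G (f i) ∧ (f i).card = I.card) ∧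
    ∀ i < ℓ, (symmDiff (f i) (f (i + 1))).card ≤ 2 * k

lemma card_symmDiff_eq {α : Type*} [DecidableEq α] (s t : Finset α) :
    (symmDiff s t).card + 2 * (s ∩ t).card = s.card + t.card := by
  have h1 : symmDiff s t = (s ∪ t) \ (s ∩ t) := symmDiff_eq_sup_sdiff_inf s t
  have h2 : (s ∩ t) ⊆ (s ∪ t) := (Finset.inter_subset_left).trans Finset.subset_union_left
  have h3 := Finset.card_sdiff_of_subset h2
  have h4 := Finset.card_union_add_card_inter s t
  have h5 : (s ∩ t).card ≤ (s ∪ t).card := Finset.card_le_card h2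
  rw [h1, h3]
  omega

theorem stmt1 {V : Type*} [Fintype V] [DecidableEq V] (G : SimpleGraph V)
    (μ : ℕ) (hμ : 1 ≤ μ) (f : ℕ → Finset V) (ℓ : ℕ) (k : ℕ)
    (hk : k = (f 0).card - μ) (hk1 : 1 ≤ k)
    (hseq : IsTJSeq G k (f 0) (f ℓ) f ℓ)
    (hshort : ∀ (g : ℕ → Finset V) (ℓ' : ℕ), IsTJSeq G k (f 0) (f ℓ) g ℓ' → ℓ ≤ ℓ') :
    ∀ i j, i < j → j ≤ ℓ → 2 ≤ j - i → ((f i) ∩ (f j)).card < μ := by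
  intro i j hij hjl h2
  by_contra hge
  push_neg at hge
  obtain ⟨-, -, hcard, hstep⟩ := hseq
  have hci : (f i).card = (f 0).card := (hcard i (le_trans hij.le hjl)).2
  have hcj : (f j).card = (f 0).card := (hcard j hjl).2
  -- intersection card bound
  have hintle : ((f i) ∩ (f j)).card ≤ (f i).card :=
    Finset.card_le_card Finset.inter_subset_left
  have hkey : (symmDiff (f i) (f j)).card ≤ 2 * k := by
    have := card_symmDiff_eq (f i) (f j)
    have hμN : μ ≤ (f 0).card := by omega
    omega
  -- shortcut sequence
  set d := j - i - 1 with hd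
  set ℓ' := ℓ + i + 1 - j with hl'
  set g : ℕ → Finset V := fun n => if n ≤ i then f n else f (n + d) with hg
  have hgseq : IsTJSeq G k (f 0) (f ℓ) g ℓ' := by
    refine ⟨?_, ?_, ?_, ?_⟩
    · simp [hg]
    · have h1 : ¬ ℓ' ≤ i := by omega
      have h2' : ℓ' + d = ℓ := by omega
      simp only [hg, h1, if_false, h2']
    · intro n hn
      by_cases hni : n ≤ i
      · simpa [hg, hni] using hcard n (by omega)
      · have : n + d ≤ ℓ := by omega
        simpa [hg, hni] using hcard (n + d) this
    · intro n hn
      by_cases hni : n + 1 ≤ i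
      · have : n ≤ i := by omega
        simpa [hg, hni, this] using hstep n (by omega)
      · by_cases hni' : n ≤ i
        · -- n = i : the jump from f i to f j
          have hni'' : n = i := by omega
          subst hni''
          have hj' : n + 1 + d = j := by omega
          simp only [hg, hni, if_false, le_refl, if_true, hj']
          exact hkey
        · have : n + d < ℓ := by omega
          have he : n + 1 + d = n + d + 1 := by omega
          simp only [hg, hni, hni', if_false, he]
          exact hstep (n + d) this
  have := hshort g ℓ' hgseq
  omega
end

section
/- Let G be a finite simple graph, let I and J be independent sets of G with |I| = |J|, and let μ be an integer with 1 ≤ μ and 2μ ≤ |I|; set k = |I| − μ. Let A ⊆ I and B ⊆ J with |A| = |B| = μ, and suppose that the subgraph of G induced on V(G) ∖ N[A ∪ B] contains an independent set I* of cardinality k, where N[X] denotes the closed neighborhood of X. Then ⟨I, A ∪ I*, B ∪ I*, J⟩ is a reconfiguration sequence under k-TJ; in particular, I and J are reconfigurable under k-TJ by a sequence of length at most 3. -/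
/-- `I` and `J` are reconfigurable under `k`-TJ. -/
def ReconfTJ {α : Type*} [DecidableEq α] (G : SimpleGraph α) (k : ℕ) (I J : Finset α) : Prop :=
  ∃ (f : ℕ → Finset α) (ℓ : ℕ), IsTJSeq G k I J f ℓ

/-- The closed neighborhood `N[X]` of a vertex subset `X`. -/
def closedNbhd {α : Type*} [Fintype α] [DecidableEq α] (G : SimpleGraph α)
    [DecidableRel G.Adj] (X : Finset α) : Finset α :=
  X ∪ X.biUnion (fun v => G.neighborFinset v)

theorem stmt3 {V : Type*} [Fintype V] [DecidableEq V] (G : SimpleGraph V)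
    [DecidableRel G.Adj] (I J : Finset V) (hI : IndepSet G I) (hJ : IndepSet G J)
    (hIJ : I.card = J.card) (μ : ℕ) (hμ1 : 1 ≤ μ) (hμ2 : 2 * μ ≤ I.card)
    (A B : Finset V) (hA : A ⊆ I) (hB : B ⊆ J) (hAcard : A.card = μ) (hBcard : B.card = μ)
    (Istar : Finset V) (hIstarSub : ∀ v ∈ Istar, v ∉ closedNbhd G (A ∪ B))
    (hIstarInd : IndepSet G Istar) (hIstarCard : Istar.card = I.card - μ) :
    IsTJSeq G (I.card - μ)  I J
      (fun i => if i = 0 then I else if i = 1 then A ∪ Istar else if i = 2 then B ∪ Istar else J)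
      3 ∧ ReconfTJ G (I.card - μ) I J := by
  classical
  have hμI : μ ≤ I.card := by omega
  have hAB_sub : A ∪ B ⊆ closedNbhd G (A ∪ B) := Finset.subset_union_left
  have hadjAB : ∀ u ∈ A ∪ B, ∀ v ∈ Istar, ¬ G.Adj u v := by
    intro u hu v hv hadj
    exact hIstarSub v hv (Finset.mem_union_right _
      (Finset.mem_biUnion.2 ⟨u, hu, (SimpleGraph.mem_neighborFinset G u v).2 hadj⟩))
  have hdisjA : Disjoint A Istar := by
    rw [Finset.disjoint_right]
    intro v hv hvA
    exact hIstarSub v hv (hAB_sub (Finset.mem_union_left _ hvA))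
  have hdisjB : Disjoint B Istar := by
    rw [Finset.disjoint_right]
    intro v hv hvB
    exact hIstarSub v hv (hAB_sub (Finset.mem_union_right _ hvB))
  have hIndA : IndepSet G (A ∪ Istar) := by
    intro u hu v hv hadj
    rcases Finset.mem_union.1 hu with hu | hu <;> rcases Finset.mem_union.1 hv with hv | hv
    · exact hI (hA hu) (hA hv) hadj
    · exact hadjAB u (Finset.mem_union_left _ hu) v hv hadj
    · exact hadjAB v (Finset.mem_union_left _ hv) u hu hadj.symm
    · exact hIstarInd hu hv hadj
  have hIndB : IndepSet G (B ∪ Istar) := by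
    intro u hu v hv hadj
    rcases Finset.mem_union.1 hu with hu | hu <;> rcases Finset.mem_union.1 hv with hv | hv
    · exact hJ (hB hu) (hB hv) hadj
    · exact hadjAB u (Finset.mem_union_right _ hu) v hv hadj
    · exact hadjAB v (Finset.mem_union_right _ hv) u hu hadj.symm
    · exact hIstarInd hu hv hadj
  have hcardA : (A ∪ Istar).card = I.card := by
    rw [Finset.card_union_of_disjoint hdisjA, hAcard, hIstarCard]; omega
  have hcardB : (B ∪ Istar).card = I.card := by
    rw [Finset.card_union_of_disjoint hdisjB, hBcard, hIstarCard]; omega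
  have hsd : ∀ s t : Finset V, (symmDiff s t).card ≤ (s \ t).card + (t \ s).card := by
    intro s t
    rw [symmDiff_def, Finset.sup_eq_union]
    exact Finset.card_union_le _ _
  -- three symmetric difference bounds
  have e0 : (symmDiff I (A ∪ Istar)).card ≤ 2 * (I.card - μ) := by
    have h1 : I \ (A ∪ Istar) ⊆ I \ A :=
      Finset.sdiff_subset_sdiff (le_refl _) Finset.subset_union_left
    have h2 : (A ∪ Istar) \ I ⊆ Istar := by
      intro v hv
      rcases Finset.mem_sdiff.1 hv with ⟨hv1, hv2⟩
      rcases Finset.mem_union.1 hv1 with h | h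
      · exact absurd (hA h) hv2
      · exact h
    have := hsd I (A ∪ Istar)
    have c1 : (I \ A).card = I.card - μ := by rw [Finset.card_sdiff_of_subset hA, hAcard]
    have := Finset.card_le_card h1
    have := Finset.card_le_card h2
    omega
  have e1 : (symmDiff (A ∪ Istar) (B ∪ Istar)).card ≤ 2 * (I.card - μ) := by
    have h1 : (A ∪ Istar) \ (B ∪ Istar) ⊆ A := by
      intro v hv
      rcases Finset.mem_sdiff.1 hv with ⟨hv1, hv2⟩
      rcases Finset.mem_union.1 hv1 with h | h
      · exact h
      · exact absurd (Finset.mem_union_right _ h) hv2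
    have h2 : (B ∪ Istar) \ (A ∪ Istar) ⊆ B := by
      intro v hv
      rcases Finset.mem_sdiff.1 hv with ⟨hv1, hv2⟩
      rcases Finset.mem_union.1 hv1 with h | h
      · exact h
      · exact absurd (Finset.mem_union_right _ h) hv2
    have := hsd (A ∪ Istar) (B ∪ Istar)
    have := Finset.card_le_card h1
    have := Finset.card_le_card h2
    omega
  have e2 : (symmDiff (B ∪ Istar) J).card ≤ 2 * (I.card - μ) := by
    have h1 : J \ (B ∪ Istar) ⊆ J \ B :=
      Finset.sdiff_subset_sdiff (le_refl _) Finset.subset_union_left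
    have h2 : (B ∪ Istar) \ J ⊆ Istar := by
      intro v hv
      rcases Finset.mem_sdiff.1 hv with ⟨hv1, hv2⟩
      rcases Finset.mem_union.1 hv1 with h | h
      · exact absurd (hB h) hv2
      · exact h
    have := hsd (B ∪ Istar) J
    have c1 : (J \ B).card = I.card - μ := by rw [Finset.card_sdiff_of_subset hB, hBcard, hIJ]
    have := Finset.card_le_card h1
    have := Finset.card_le_card h2
    omega
  have hseq : IsTJSeq G (I.card - μ) I J
      (fun i => if i = 0 then I else if i = 1 then A ∪ Istar else if i = 2 then B ∪ Istar else J)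
      3 := by
    refine ⟨rfl, rfl, ?_, ?_⟩
    · intro i hi
      interval_cases i
      · exact ⟨hI, rfl⟩
      · exact ⟨hIndA, hcardA⟩
      · exact ⟨hIndB, hcardB⟩
      · exact ⟨hJ, hIJ.symm⟩
    · intro i hi
      interval_cases i
      · exact e0
      · exact e1
      · exact e2
  exact ⟨hseq, _, 3, hseq⟩
end

section
/- Let G be a finite simple graph, let S and T be vertex covers of G with |S| = |T|, let μ be an integer with 1 ≤ μ ≤ |S|, and set k = |S| − μ. Define the reconfiguration graph 𝒞 whose vertices are the vertex covers of G of cardinality exactly |S|, two distinct such covers S' and T' being joined by an edge if and only if |S' △ T'| ≤ 2k. Define the clique-compressed reconfiguration graph 𝒞' whose vertices are the μ-element subsets of V(G), two distinct such subsets X and Y being joined by an edge if and only if there exists a vertex cover W of G with |W| = |S| and X ∪ Y ⊆ W. Then for every X ⊆ S and Y ⊆ T with |X| = |Y| = μ, the covers S and T are connected by a walk in 𝒞 if and only if X and Y are connected by a walk in 𝒞'. -/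
/-- A vertex cover: every edge has at least one endpoint in the set. -/
def IsVC {α : Type*} (G : SimpleGraph α) (S : Finset α) : Prop :=
  ∀ ⦃u v⦄, G.Adj u v → u ∈ S ∨ v ∈ S

/-- The reconfiguration graph `𝒞`: nodes are the vertex covers of `G` of cardinality
exactly `c`, two distinct such covers being joined by an edge iff their symmetric
difference has cardinality at most `2k` (i.e. they are adjacent under `k`-TJ).
(It is realized on all of `Finset α`; finsets that are not vertex covers of
cardinality `c` are isolated.) -/
def reconGraph {α : Type*} [DecidableEq α] (G : SimpleGraph α) (c k : ℕ) :
    SimpleGraph (Finset α) where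
  Adj A B := A ≠ B ∧ IsVC G A ∧ IsVC G B ∧ A.card = c ∧ B.card = c ∧
    (symmDiff A B).card ≤ 2 * k
  symm := by
    constructor
    rintro A B ⟨h1, h2, h3, h4, h5, h6⟩
    exact ⟨h1.symm, h3, h2, h5, h4, by rwa [symmDiff_comm]⟩
  loopless := by constructor; rintro A ⟨h1, -⟩; exact h1 rfl

/-- The clique-compressed reconfiguration graph `𝒞'`: nodes are the `μ`-element subsets
of the vertex set, two distinct such subsets `X`, `Y` being joined by an edge iff there
is a vertex cover `W` of `G` of cardinality `c` with `X ∪ Y ⊆ W`.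
(It is realized on all of `Finset α`; finsets of cardinality other than `μ` are
isolated.) -/
def cliqueGraph {α : Type*} [DecidableEq α] (G : SimpleGraph α) (c μ : ℕ) :
    SimpleGraph (Finset α) where
  Adj X Y := X ≠ Y ∧ X.card = μ ∧ Y.card = μ ∧
    ∃ W : Finset α, IsVC G W ∧ W.card = c ∧ X ∪ Y ⊆ W
  symm := by
    constructor
    rintro X Y ⟨h1, h2, h3, W, hW1, hW2, hW3⟩
    exact ⟨h1.symm, h3, h2, W, hW1, hW2, by rwa [Finset.union_comm]⟩
  loopless := by constructor; rintro X ⟨h1, -⟩; exact h1 rfl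

/-!
Two covers of size `c` are `(c - μ)`-TJ adjacent exactly when they share at least `μ`
vertices, and any two `μ`-subsets of one cover of size `c` are equal or adjacent in `𝒞'`.
So a walk `S = W₀, W₁, …, Wₙ = T` in `𝒞` yields a walk in `𝒞'` through `μ`-subsets of the
consecutive intersections `Wᵢ ∩ Wᵢ₊₁`, and a walk `X = X₀, X₁, …, Xₙ = Y` in `𝒞'` with
witnesses `Wᵢ ⊇ Xᵢ ∪ Xᵢ₊₁` yields the walk `S, W₀, …, Wₙ₋₁, T` in `𝒞`.
-/

open Finset

theorem Finset.card_symmDiff_add_two_mul_card_inter {α : Type*} [DecidableEq α]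
    (s t : Finset α) : #(symmDiff s t) + 2 * #(s ∩ t) = #s + #t := by
  have hsd : #(symmDiff s t) = #(s \ t) + #(t \ s) := by
    rw [symmDiff_def, sup_eq_union]
    exact card_union_of_disjoint disjoint_sdiff_sdiff
  have hs := card_sdiff_add_card_inter s t
  have ht := card_sdiff_add_card_inter t s
  rw [inter_comm] at ht
  omega

theorem Finset.card_symmDiff_le_iff_le_card_inter {α : Type*} [DecidableEq α]
    {s t : Finset α} {c μ : ℕ} (hs : #s = c) (ht : #t = c) (hμ : μ ≤ c) :
    #(symmDiff s t) ≤ 2 * (c - μ) ↔ μ ≤ #(s ∩ t) := by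
  have := card_symmDiff_add_two_mul_card_inter s t
  omega

section

variable {V : Type*} [DecidableEq V] {G : SimpleGraph V} {c μ : ℕ}

theorem reconGraph_reachable_of_subset_inter {A B Z : Finset V} (hA : IsVC G A)
    (hB : IsVC G B) (hAc : #A = c) (hBc : #B = c) (hZ : Z ⊆ A ∩ B) (hZc : #Z = μ) :
    (reconGraph G c (c - μ)).Reachable A B := by
  obtain rfl | hAB := eq_or_ne A B
  · rfl
  have hμ : μ ≤ #(A ∩ B) := hZc ▸ card_le_card hZ
  have hμc : μ ≤ c := hAc ▸ hμ.trans (card_le_card inter_subset_left)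
  exact SimpleGraph.Adj.reachable ⟨hAB, hA, hB, hAc, hBc,
    (card_symmDiff_le_iff_le_card_inter hAc hBc hμc).2 hμ⟩

theorem cliqueGraph_reachable_of_subset {X Y W : Finset V} (hW : IsVC G W) (hWc : #W = c)
    (hX : X ⊆ W) (hY : Y ⊆ W) (hXc : #X = μ) (hYc : #Y = μ) :
    (cliqueGraph G c μ).Reachable X Y := by
  obtain rfl | hXY := eq_or_ne X Y
  · rfl
  exact SimpleGraph.Adj.reachable ⟨hXY, hXc, hYc, W, hW, hWc, union_subset hX hY⟩

theorem exists_subset_inter_card_eq_of_reconGraph_adj {A B : Finset V}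
    (h : (reconGraph G c (c - μ)).Adj A B) (hμc : μ ≤ c) : ∃ Z ⊆ A ∩ B, #Z = μ := by
  obtain ⟨-, -, -, hAc, hBc, hAB⟩ := h
  exact exists_subset_card_eq ((card_symmDiff_le_iff_le_card_inter hAc hBc hμc).1 hAB)

theorem cliqueGraph_reachable_of_reconGraph_walk {A B : Finset V}
    (p : (reconGraph G c (c - μ)).Walk A B) (hA : IsVC G A) (hAc : #A = c)
    {Z Z' : Finset V} (hZ : Z ⊆ A) (hZc : #Z = μ) (hZ' : Z' ⊆ B) (hZ'c : #Z' = μ) :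
    (cliqueGraph G c μ).Reachable Z Z' := by
  induction p generalizing Z with
  | nil => exact cliqueGraph_reachable_of_subset hA hAc hZ hZ' hZc hZ'c
  | cons hadj _ ih =>
    obtain ⟨Z'', hZ'', hZ''c⟩ :=
      exists_subset_inter_card_eq_of_reconGraph_adj hadj (hAc ▸ hZc ▸ card_le_card hZ)
    obtain ⟨-, -, hA', -, hA'c, -⟩ := hadj
    exact (cliqueGraph_reachable_of_subset hA hAc hZ (hZ''.trans inter_subset_left) hZc
      hZ''c).trans (ih hA' hA'c (hZ''.trans inter_subset_right) hZ''c hZ')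

theorem reconGraph_reachable_of_cliqueGraph_walk {X Y : Finset V}
    (p : (cliqueGraph G c μ).Walk X Y) (hXc : #X = μ) {A B : Finset V} (hA : IsVC G A)
    (hAc : #A = c) (hB : IsVC G B) (hBc : #B = c) (hX : X ⊆ A) (hY : Y ⊆ B) :
    (reconGraph G c (c - μ)).Reachable A B := by
  induction p generalizing A with
  | nil => exact reconGraph_reachable_of_subset_inter hA hB hAc hBc (subset_inter hX hY) hXc
  | cons hadj _ ih =>
    obtain ⟨-, -, hX'c, W, hW, hWc, hXW⟩ := hadj
    exact (reconGraph_reachable_of_subset_inter hA hW hAc hWc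
      (subset_inter hX (subset_union_left.trans hXW)) hXc).trans
      (ih hX'c hW hWc (subset_union_right.trans hXW) hY)

end

theorem stmt5_general {V : Type*} [DecidableEq V] (G : SimpleGraph V)
    (S T : Finset V) (hS : IsVC G S) (hT : IsVC G T) (hST : S.card = T.card)
    (μ : ℕ)
    (X Y : Finset V) (hX : X ⊆ S) (hY : Y ⊆ T) (hXcard : X.card = μ) (hYcard : Y.card = μ) :
    (reconGraph G S.card (S.card - μ)).Reachable S T ↔
      (cliqueGraph G S.card μ).Reachable X Y :=
  ⟨fun ⟨p⟩ => cliqueGraph_reachable_of_reconGraph_walk p hS rfl hX hXcard hY hYcard,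
    fun ⟨p⟩ => reconGraph_reachable_of_cliqueGraph_walk p hXcard hS rfl hT hST.symm hX hY⟩

theorem stmt5 {V : Type*} [Fintype V] [DecidableEq V] (G : SimpleGraph V)
    (S T : Finset V) (hS : IsVC G S) (hT : IsVC G T) (hST : S.card = T.card)
    (μ : ℕ) (hμ1 : 1 ≤ μ) (hμ2 : μ ≤ S.card)
    (X Y : Finset V) (hX : X ⊆ S) (hY : Y ⊆ T) (hXcard : X.card = μ) (hYcard : Y.card = μ) :
    (reconGraph G S.card (S.card - μ)).Reachable S T ↔
      (cliqueGraph G S.card μ).Reachable X Y :=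
  stmt5_general G S T hS hT hST μ X Y hX hY hXcard hYcard
end

section
/- Let G be a finite simple graph, let k ≥ 1 be an integer, and let S and T be vertex covers of G with |S| = |T|. If S and T are reconfigurable under k-TJ, then there exists a TAR sequence of vertex covers from S to T in which every set has cardinality at most |S| + k. -/
/-- `S` and `T` are reconfigurable under `k`-TJ: there is a finite sequence of
vertex covers, all of cardinality `|S|`, from `S` to `T`, with consecutive sets
having symmetric difference of cardinality at most `2k`. -/
def ReconfVCTJ {α : Type*} [DecidableEq α] (G : SimpleGraph α) (k : ℕ) (S T : Finset α) : Prop :=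
  ∃ (f : ℕ → Finset α) (ℓ : ℕ), f 0 = S ∧ f ℓ = T ∧
    (∀ i ≤ ℓ, IsVC G (f i) ∧ (f i).card = S.card) ∧
    ∀ i < ℓ, (symmDiff (f i) (f (i + 1))).card ≤ 2 * k

section Aux
variable {V : Type*} [DecidableEq V]

/-- TAR reachability with all sets satisfying `Q`. -/
def TARp (Q : Finset V → Prop) (A B : Finset V) : Prop :=
  ∃ (f : ℕ → Finset V) (m : ℕ), f 0 = A ∧ f m = B ∧ (∀ i ≤ m, Q (f i)) ∧
    ∀ i < m, (symmDiff (f i) (f (i + 1))).card = 1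

lemma tarp_refl {Q : Finset V → Prop} {A : Finset V} (hA : Q A) : TARp Q A A :=
  ⟨fun _ => A, 0, rfl, rfl, fun _ _ => hA, fun i hi => absurd hi (Nat.not_lt_zero i)⟩

lemma tarp_trans {Q : Finset V → Prop} {A B C : Finset V}
    (h1 : TARp Q A B) (h2 : TARp Q B C) : TARp Q A C := by
  obtain ⟨f, m, hf0, hfm, hfQ, hfs⟩ := h1
  obtain ⟨g, n, hg0, hgn, hgQ, hgs⟩ := h2
  refine ⟨fun i => if i ≤ m then f i else g (i - m), m + n, by simp [hf0], ?_, ?_, ?_⟩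
  · show (if m + n ≤ m then f (m + n) else g (m + n - m)) = C
    by_cases h : m + n ≤ m
    · have hn : n = 0 := by omega
      rw [if_pos h]
      subst hn
      rw [Nat.add_zero, hfm, ← hgn, hg0]
    · rw [if_neg h, Nat.add_sub_cancel_left, hgn]
  · intro i hi
    by_cases h : i ≤ m
    · simpa [h] using hfQ i h
    · simp only [h, if_neg]
      exact hgQ _ (by omega)
  · intro i hi
    by_cases h : i + 1 ≤ m
    · have h' : i ≤ m := by omega
      simpa [h, h'] using hfs i (by omega)
    · by_cases h' : i ≤ m
      · have him : i = m := by omega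
        have hn : 0 < n := by omega
        have : i + 1 - m = 1 := by omega
        simp only [h', if_pos, h, if_neg, this]
        rw [him, hfm, ← hg0]
        exact hgs 0 hn
      · simp only [h, h', if_neg]
        have : i + 1 - m = (i - m) + 1 := by omega
        rw [this]
        exact hgs _ (by omega)

lemma tarp_rev {Q : Finset V → Prop} {A B : Finset V}
    (h : TARp Q A B) : TARp Q B A := by
  obtain ⟨f, m, hf0, hfm, hfQ, hfs⟩ := h
  refine ⟨fun i => f (m - i), m, by simpa, by simpa using hf0, fun i hi => hfQ _ (by omega), ?_⟩
  intro i hi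
  have h1 : m - i = (m - (i + 1)) + 1 := by omega
  show (symmDiff (f (m - i)) (f (m - (i + 1)))).card = 1
  rw [h1, symmDiff_comm]
  exact hfs _ (by omega)

lemma tarp_prepend {Q : Finset V → Prop} {A A' B : Finset V}
    (hA : Q A) (hd : (symmDiff A A').card = 1) (h : TARp Q A' B) : TARp Q A B := by
  obtain ⟨f, m, hf0, hfm, hfQ, hfs⟩ := h
  refine ⟨fun i => if i = 0 then A else f (i - 1), m + 1, by simp, by simp [hfm], ?_, ?_⟩
  · intro i hi
    rcases Nat.eq_zero_or_pos i with h0 | h0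
    · simpa [h0] using hA
    · simp only [Nat.pos_iff_ne_zero.mp h0, if_neg]
      exact hfQ _ (by omega)
  · intro i hi
    rcases Nat.eq_zero_or_pos i with h0 | h0
    · subst h0
      simpa [hf0] using hd
    · have : i ≠ 0 := by omega
      simp only [this, if_neg, Nat.add_one_sub_one, Nat.succ_ne_zero]
      have h2 : i - 1 + 1 = i := by omega
      rw [← h2] at hi ⊢
      exact hfs _ (by omega)

lemma tarp_up {Q : Finset V → Prop} {A C : Finset V} (hAC : A ⊆ C)
    (hQ : ∀ X, A ⊆ X → X ⊆ C → Q X) : TARp Q A C := by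
  generalize hn : (C \ A).card = n
  induction n generalizing A with
  | zero =>
    have : A = C := by
      have := Finset.card_eq_zero.mp hn
      have := Finset.sdiff_eq_empty_iff_subset.mp this
      exact Finset.Subset.antisymm hAC this
    subst this
    exact tarp_refl (hQ A (le_refl _) (le_refl _))
  | succ n ih =>
    have hne : (C \ A).Nonempty := by rw [← Finset.card_pos, hn]; omega
    obtain ⟨x, hx⟩ := hne
    rw [Finset.mem_sdiff] at hx
    have hxA : x ∉ A := hx.2
    have hsub : insert x A ⊆ C := Finset.insert_subset hx.1 hAC
    have hcard : (C \ insert x A).card = n := by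
      have : C \ insert x A = (C \ A).erase x := by
        ext y; simp [Finset.mem_sdiff, Finset.mem_erase]; tauto
      rw [this, Finset.card_erase_of_mem (by rw [Finset.mem_sdiff]; exact hx), hn]
      omega
    have htar := ih hsub (fun X h1 h2 => hQ X (le_trans (Finset.subset_insert x A) h1) h2) hcard
    refine tarp_prepend (hQ A (le_refl _) hAC) ?_ htar
    have : symmDiff A (insert x A) = {x} := by
      ext y
      simp only [Finset.mem_symmDiff, Finset.mem_insert, Finset.mem_singleton]
      constructor
      · rintro (⟨h1, h2⟩ | ⟨h1, h2⟩)
        · exact absurd (Or.inr h1) h2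
        · rcases h1 with h1 | h1
          · exact h1
          · exact absurd h1 h2
      · rintro rfl
        exact Or.inr ⟨Or.inl rfl, hxA⟩
    rw [this, Finset.card_singleton]
end Aux

theorem stmt8 {V : Type*} [Fintype V] [DecidableEq V] (G : SimpleGraph V)
    (k : ℕ) (hk : 1 ≤ k) (S T : Finset V) (hS : IsVC G S) (hT : IsVC G T)
    (hST : S.card = T.card) (hrec : ReconfVCTJ G k S T) :
    ∃ (f : ℕ → Finset V) (m : ℕ), f 0 = S ∧ f m = T ∧
      (∀ i ≤ m, IsVC G (f i) ∧ (f i).card ≤ S.card + k) ∧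
      ∀ i < m, (symmDiff (f i) (f (i + 1))).card = 1 := by
  set Q : Finset V → Prop := fun X => IsVC G X ∧ X.card ≤ S.card + k with hQdef
  obtain ⟨g, ℓ, hg0, hgℓ, hgQ, hgs⟩ := hrec
  -- step lemma
  have step : ∀ A B : Finset V, IsVC G A → IsVC G B → A.card = S.card → B.card = S.card →
      (symmDiff A B).card ≤ 2 * k → TARp Q A B := by
    intro A B hA hB hcA hcB hd
    have hvc : ∀ X : Finset V, A ⊆ X → IsVC G X ∨ True := fun _ _ => Or.inr trivial
    have hBA : (B \ A).card ≤ k := by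
      have h1 : (symmDiff A B).card = (A \ B).card + (B \ A).card := by
        rw [symmDiff_def, Finset.sup_eq_union]
        exact Finset.card_union_of_disjoint (disjoint_sdiff_sdiff)
      have h2 : (A \ B).card = (B \ A).card := by
        have ha := Finset.card_sdiff_add_card_inter A B
        have hb := Finset.card_sdiff_add_card_inter B A
        rw [Finset.inter_comm] at hb
        omega
      omega
    have hUcard : (A ∪ B).card ≤ S.card + k := by
      have : (A ∪ B).card = A.card + (B \ A).card := by
        rw [← Finset.card_union_of_disjoint (Finset.disjoint_sdiff), Finset.union_sdiff_self_eq_union]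
      omega
    have hQA : ∀ X : Finset V, A ⊆ X → X ⊆ A ∪ B → Q X := by
      intro X h1 h2
      refine ⟨fun u v huv => ?_, le_trans (Finset.card_le_card h2) hUcard⟩
      rcases hA huv with h | h
      · exact Or.inl (h1 h)
      · exact Or.inr (h1 h)
    have hQB : ∀ X : Finset V, B ⊆ X → X ⊆ A ∪ B → Q X := by
      intro X h1 h2
      refine ⟨fun u v huv => ?_, le_trans (Finset.card_le_card h2) hUcard⟩
      rcases hB huv with h | h
      · exact Or.inl (h1 h)
      · exact Or.inr (h1 h)
    exact tarp_trans (tarp_up Finset.subset_union_left hQA)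
      (tarp_rev (tarp_up Finset.subset_union_right hQB))
  have main : ∀ i ≤ ℓ, TARp Q S (g i) := by
    intro i
    induction i with
    | zero => intro _; rw [hg0]; exact tarp_refl ⟨hS, Nat.le_add_right _ _⟩
    | succ i ih =>
      intro hi
      have h1 := hgQ i (by omega)
      have h2 := hgQ (i + 1) hi
      exact tarp_trans (ih (by omega))
        (step (g i) (g (i + 1)) h1.1 h2.1 h1.2 h2.2 (hgs i (by omega)))
  have := main ℓ (le_refl _)
  rw [hgℓ] at this
  obtain ⟨f, m, hf0, hfm, hfQ, hfs⟩ := this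
  exact ⟨f, m, hf0, hfm, fun i hi => hfQ i hi, hfs⟩
end

section
/- Let V be a type, let x, y ∈ V, and let P be a predicate on assignments V → Bool. Call an assignment mixed if it attains both the value true and the value false. Then there exists a mixed assignment b : V → Bool with P(b) if and only if there exists a mixed assignment b' on the disjoint union V ⊕ {z} of V with one new element z such that P holds of the restriction of b' to V and b'(z) = b'(x) ∨ b'(y). -/
/-- An assignment is mixed if it attains both `true` and `false`. -/
def Mixed {α : Type*} (b : α → Bool) : Prop :=
  (∃ u, b u = true) ∧ (∃ w, b w = false)

theorem stmt11 {V : Type*} (x y : V) (P : (V → Bool) → Prop) :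
    (∃ b : V → Bool, Mixed b ∧ P b) ↔
      (∃ b' : V ⊕ Unit → Bool, Mixed b' ∧ P (fun v => b' (Sum.inl v)) ∧
        b' (Sum.inr ()) = (b' (Sum.inl x) || b' (Sum.inl y))) := by
  constructor
  · rintro ⟨b, ⟨⟨u, hu⟩, ⟨w, hw⟩⟩, hP⟩
    exact ⟨Sum.elim b (fun _ => b x || b y),
      ⟨⟨Sum.inl u, hu⟩, ⟨Sum.inl w, hw⟩⟩, hP, rfl⟩
  · rintro ⟨b', ⟨⟨u, hu⟩, ⟨w, hw⟩⟩, hP, hz⟩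
    refine ⟨fun v => b' (Sum.inl v), ⟨?_, ?_⟩, hP⟩
    · rcases u with v | ⟨⟩
      · exact ⟨v, hu⟩
      · rw [hz] at hu
        rcases Bool.or_eq_true_iff.mp hu with h | h
        · exact ⟨x, h⟩
        · exact ⟨y, h⟩
    · rcases w with v | ⟨⟩
      · exact ⟨v, hw⟩
      · rw [hz] at hw
        rcases Bool.or_eq_false_iff.mp hw with ⟨h, _⟩
        exact ⟨x, h⟩
end
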